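/- Let σ ≠ 0 and let Q : ℝ → ℝ be continuously differentiable and 1-periodic (Q(y+1) = Q(y) for all y). Set Ẑ = ∫₀¹ exp(2Q(y)/σ²) dy and Z = ∫₀¹ exp(−2Q(y)/σ²) dy, and define ψ(y) = exp(2Q(y)/σ²)/Ẑ − 1. Then: (i) ψ is 1-periodic and satisfies (σ²/2)·ψ′(y) − Q′(y)·ψ(y) = Q′(y) for all y ∈ ℝ (the derivative of the one-dimensional cell problem with drift f = −Q′ and diffusion σ²); (ii) ∫₀¹ (1 + ψ(y)) · Z⁻¹ exp(−2Q(y)/σ²) dy = (Z·Ẑ)⁻¹ and ∫₀¹ (1 + ψ(y))² · Z⁻¹ exp(−2Q(y)/σ²) dy = (Z·Ẑ)⁻¹. -/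

import Mathlib

/-- Let `σ ≠ 0` and let `Q : ℝ → ℝ` be continuously differentiable and
1-periodic.  Set `Ẑ = ∫₀¹ exp(2Q/σ²)`, `Z = ∫₀¹ exp(−2Q/σ²)`, and
`ψ(y) = exp(2Q(y)/σ²)/Ẑ − 1`.  Then:
(i) `ψ` is 1-periodic and `(σ²/2)·ψ′(y) − Q′(y)·ψ(y) = Q′(y)` for all `y`;
(ii) `∫₀¹ (1+ψ)·Z⁻¹exp(−2Q/σ²) = (Z·Ẑ)⁻¹` and `∫₀¹ (1+ψ)²·Z⁻¹exp(−2Q/σ²) = (Z·Ẑ)⁻¹`. -/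
theorem statement9 (σ : ℝ) (hσ : σ ≠ 0) (Q : ℝ → ℝ) (hQ : ContDiff ℝ 1 Q)
    (hper : ∀ y : ℝ, Q (y + 1) = Q y)
    (Zhat Z : ℝ)
    (hZhat : Zhat = ∫ y in (0:ℝ)..1, Real.exp (2 * Q y / σ ^ 2))
    (hZ : Z = ∫ y in (0:ℝ)..1, Real.exp (-2 * Q y / σ ^ 2))
    (ψ : ℝ → ℝ) (hψ : ∀ y : ℝ, ψ y = Real.exp (2 * Q y / σ ^ 2) / Zhat - 1) :
    (∀ y : ℝ, ψ (y + 1) = ψ y) ∧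
    (∀ y : ℝ, σ ^ 2 / 2 * deriv ψ y - deriv Q y * ψ y = deriv Q y) ∧
    (∫ y in (0:ℝ)..1, (1 + ψ y) * (Z⁻¹ * Real.exp (-2 * Q y / σ ^ 2))) = (Z * Zhat)⁻¹ ∧
    (∫ y in (0:ℝ)..1, (1 + ψ y) ^ 2 * (Z⁻¹ * Real.exp (-2 * Q y / σ ^ 2)))
      = (Z * Zhat)⁻¹ := by
  have hσ2 : (σ : ℝ) ^ 2 ≠ 0 := pow_ne_zero 2 hσ
  have hQc : Continuous Q := hQ.continuous
  have hcont : Continuous fun y => Real.exp (2 * Q y / σ ^ 2) :=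
    ((continuous_const.mul hQc).div_const _).rexp
  have hZhat_pos : 0 < Zhat := by
    rw [hZhat]
    apply intervalIntegral.intervalIntegral_pos_of_pos_on
      (hcont.intervalIntegrable 0 1)
    · intro x _; exact Real.exp_pos _
    · norm_num
  have hZhat_ne : Zhat ≠ 0 := ne_of_gt hZhat_pos
  have hQd : Differentiable ℝ Q := hQ.differentiable one_ne_zero
  constructor
  · intro y; rw [hψ, hψ, hper]
  refine ⟨?_, ?_, ?_⟩
  · intro y
    have hd : HasDerivAt (fun y => Real.exp (2 * Q y / σ ^ 2) / Zhat - 1)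
        (Real.exp (2 * Q y / σ ^ 2) * (2 * deriv Q y / σ ^ 2) / Zhat) y := by
      have h1 : HasDerivAt (fun y => 2 * Q y / σ ^ 2) (2 * deriv Q y / σ ^ 2) y :=
        (((hQd y).hasDerivAt).const_mul 2).div_const _
      exact (h1.exp.div_const Zhat).sub_const 1
    have hψe : ψ = fun y => Real.exp (2 * Q y / σ ^ 2) / Zhat - 1 := funext hψ
    rw [hψe, hd.deriv]
    simp only []
    field_simp
    ring
  · have : ∀ y : ℝ, (1 + ψ y) * (Z⁻¹ * Real.exp (-2 * Q y / σ ^ 2)) = Z⁻¹ * Zhat⁻¹ := by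
      intro y
      rw [hψ]
      have h : Real.exp (-2 * Q y / σ ^ 2) = (Real.exp (2 * Q y / σ ^ 2))⁻¹ := by
        rw [← Real.exp_neg]; ring_nf
      rw [h]
      have he := (Real.exp_pos (2 * Q y / σ ^ 2)).ne'
      field_simp
      ring
    simp only [this, intervalIntegral.integral_const]
    rw [mul_inv]
    norm_num
  · have : ∀ y : ℝ, (1 + ψ y) ^ 2 * (Z⁻¹ * Real.exp (-2 * Q y / σ ^ 2)) =
        (Zhat ^ 2 * Z)⁻¹ * Real.exp (2 * Q y / σ ^ 2) := by
      intro y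
      rw [hψ]
      have h : Real.exp (-2 * Q y / σ ^ 2) = (Real.exp (2 * Q y / σ ^ 2))⁻¹ := by
        rw [← Real.exp_neg]; ring_nf
      rw [h]
      have he := (Real.exp_pos (2 * Q y / σ ^ 2)).ne'
      field_simp
      ring
    simp only [this]
    rw [intervalIntegral.integral_const_mul, ← hZhat]
    by_cases hZ0 : Z = 0
    · simp [hZ0]
    · field_simp
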